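/- arXiv:1906.01583 — 14 statements merged into one kernel-verified Lean document; each statement's English description precedes it below -/
import Mathlib

section
/- Theorem 1 (equivalence of induction and strong induction for safety certificates): There exists a safe inductive invariant for the transition system if and only if there exists some k ≥ 1 and a safe k-inductive invariant for the transition system. -/
namespace KAvy

variable {σ : Type*}

/-- A path of length `n`: `Tr (s j) (s (j+1))` for all `j < n`. -/
def IsPath (Tr : σ → σ → Prop) (s : ℕ → σ) (n : ℕ) : Prop :=
  ∀ j, j < n → Tr (s j) (s (j + 1))

/-- A state is reachable if it is the endpoint of some path starting in `Init`. -/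
def Reachable (Init : Set σ) (Tr : σ → σ → Prop) (x : σ) : Prop :=
  ∃ (n : ℕ) (s : ℕ → σ), s 0 ∈ Init ∧ IsPath Tr s n ∧ s n = x

/-- An inductive invariant: contains `Init` and is closed under `Tr`. -/
def IsInductiveInvariant (Init : Set σ) (Tr : σ → σ → Prop) (Inv : Set σ) : Prop :=
  Init ⊆ Inv ∧ ∀ a b, a ∈ Inv → Tr a b → b ∈ Inv

/-- `Inv` is a `k`-invariant: every path from `Init` of length `n ≤ k` stays in `Inv`. -/
def IsKInvariant (Init : Set σ) (Tr : σ → σ → Prop) (Inv : Set σ) (k : ℕ) : Prop :=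
  ∀ n, n ≤ k → ∀ s : ℕ → σ, s 0 ∈ Init → IsPath Tr s n → ∀ j, j ≤ n → s j ∈ Inv

/-- `Inv` is a `k`-inductive invariant: it is a `(k-1)`-invariant and every path of
length `k` whose first `k` states are in `Inv` ends in `Inv`. -/
def IsKInductiveInvariant (Init : Set σ) (Tr : σ → σ → Prop) (Inv : Set σ) (k : ℕ) : Prop :=
  IsKInvariant Init Tr Inv (k - 1) ∧
  ∀ s : ℕ → σ, IsPath Tr s k → (∀ j, j < k → s j ∈ Inv) → s k ∈ Inv

/-- An inductive trace of size `N`. -/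
def IsTrace (Init : Set σ) (Tr : σ → σ → Prop) (F : ℕ → Set σ) (N : ℕ) : Prop :=
  F 0 = Init ∧ ∀ i, i < N → ∀ a b, a ∈ F i → Tr a b → b ∈ F (i + 1)

/-- A trace of size `N` is safe if every frame avoids `Bad`. -/
def TraceSafe (Bad : Set σ) (F : ℕ → Set σ) (N : ℕ) : Prop :=
  ∀ i, i ≤ N → F i ∩ Bad = ∅

/-- A trace of size `N` is monotone if frames are increasing. -/
def TraceMonotone (F : ℕ → Set σ) (N : ℕ) : Prop :=
  ∀ i, i < N → F i ⊆ F (i + 1)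

/-- A trace `G` of size `M` is stronger than a trace `F` of size `N`. -/
def Stronger (G : ℕ → Set σ) (M : ℕ) (F : ℕ → Set σ) (N : ℕ) : Prop :=
  ∀ i, i ≤ min N M → G i ⊆ F i

/-- `i` is an extension level of the safe trace `F` of size `N`. -/
def IsExtensionLevel (Init Bad : Set σ) (Tr : σ → σ → Prop) (F : ℕ → Set σ)
    (N i : ℕ) : Prop :=
  i ≤ N ∧ ∃ (G : ℕ → Set σ) (M : ℕ), N < M ∧ IsTrace Init Tr G M ∧ TraceSafe Bad G M ∧
    Stronger G M F N ∧ ∀ a b, a ∈ F i → Tr a b → b ∈ G (i + 1)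

/-- `(i, k)` is a strong extension level (SEL) of the safe trace `F` of size `N`. -/
def IsSEL (Init Bad : Set σ) (Tr : σ → σ → Prop) (F : ℕ → Set σ) (N i k : ℕ) : Prop :=
  i ≤ N ∧ 1 ≤ k ∧ k ≤ i + 1 ∧
  ∃ (G : ℕ → Set σ) (M : ℕ), N < M ∧ IsTrace Init Tr G M ∧ TraceSafe Bad G M ∧
    Stronger G M F N ∧
    ∀ s : ℕ → σ, IsPath Tr s k → (∀ j, j < k → s j ∈ F i) → s k ∈ G (i + 1)

/-- Satisfiability of the suffix formula `Tr[F^i] ∧ Bad(v_{N+1})`. -/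
def SuffixSat (Bad : Set σ) (Tr : σ → σ → Prop) (F : ℕ → Set σ) (N i : ℕ) : Prop :=
  ∃ s : ℕ → σ, (∀ j, i ≤ j → j ≤ N → Tr (s j) (s (j + 1))) ∧
    (∀ j, i ≤ j → j ≤ N → s j ∈ F j) ∧ s (N + 1) ∈ Bad

/-- Satisfiability of the characteristic formula `χ(F, i, k) ∧ Bad(v_{N+1})`. -/
def ChiSat (Bad : Set σ) (Tr : σ → σ → Prop) (F : ℕ → Set σ) (N i k : ℕ) : Prop :=
  ∃ s : ℕ → σ, (∀ j, i + 1 - k ≤ j → j ≤ N → Tr (s j) (s (j + 1))) ∧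
    (∀ j, i + 1 - k ≤ j → j ≤ i → s j ∈ F i) ∧
    (∀ j, i < j → j ≤ N → s j ∈ F j) ∧ s (N + 1) ∈ Bad

/-- The sequence-interpolant conditions (♥) for `I_{i-k+2}, …, I_{N+1}`. -/
def SeqItp (Bad : Set σ) (Tr : σ → σ → Prop) (F : ℕ → Set σ) (N i k : ℕ)
    (I : ℕ → Set σ) : Prop :=
  (∀ a b, a ∈ F i → Tr a b → b ∈ I (i + 2 - k)) ∧
  (∀ j, i + 2 - k ≤ j → j ≤ i → ∀ a b, a ∈ F i → a ∈ I j → Tr a b → b ∈ I (j + 1)) ∧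
  (∀ j, i < j → j ≤ N → ∀ a b, a ∈ F j → a ∈ I j → Tr a b → b ∈ I (j + 1)) ∧
  I (N + 1) ∩ Bad = ∅


/-- Every reachable state lies in a `k`-inductive invariant. -/
lemma reachable_mem_of_kInductive {Init : Set σ} {Tr : σ → σ → Prop} {Inv : Set σ} {k : ℕ}
    (hk : 1 ≤ k) (h : IsKInductiveInvariant Init Tr Inv k) :
    ∀ x, Reachable Init Tr x → x ∈ Inv := by
  rintro x ⟨n, s, h0, hp, rfl⟩
  suffices H : ∀ j, j ≤ n → s j ∈ Inv from H n le_rfl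
  intro j
  induction j using Nat.strong_induction_on with
  | _ j ih =>
    intro hjn
    by_cases hjk : j ≤ k - 1
    · exact h.1 j hjk s h0 (fun l hl => hp l (lt_of_lt_of_le hl hjn)) j le_rfl
    · push_neg at hjk
      have hkj : k ≤ j := by omega
      set t : ℕ → σ := fun m => s (j - k + m) with ht
      have hpath : IsPath Tr t k := by
        intro l hl
        have : j - k + l < n := by omega
        exact hp _ this
      have hmem : ∀ m, m < k → t m ∈ Inv := by
        intro m hm
        exact ih (j - k + m) (by omega) (by omega)
      have := h.2 t hpath hmem
      have heq : j - k + k = j := by omega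
      simpa [ht, heq] using this

/-- Theorem 1: there exists a safe inductive invariant iff there exists some `k ≥ 1`
and a safe `k`-inductive invariant. -/
theorem safe_inductive_iff_safe_kInductive
    (Init Bad : Set σ) (Tr : σ → σ → Prop) :
    (∃ Inv : Set σ, IsInductiveInvariant Init Tr Inv ∧ Inv ∩ Bad = ∅) ↔
    (∃ k : ℕ, 1 ≤ k ∧ ∃ Inv : Set σ, IsKInductiveInvariant Init Tr Inv k ∧ Inv ∩ Bad = ∅) := by
  constructor
  · rintro ⟨Inv, ⟨hinit, hstep⟩, hsafe⟩
    refine ⟨1, le_rfl, Inv, ⟨?_, ?_⟩, hsafe⟩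
    · intro n hn s h0 _ j hj
      interval_cases n
      interval_cases j
      exact hinit h0
    · intro s hpath hmem
      exact hstep (s 0) (s 1) (hmem 0 one_pos) (hpath 0 one_pos)
  · rintro ⟨k, hk, Inv, hInv, hsafe⟩
    refine ⟨{x | Reachable Init Tr x}, ⟨?_, ?_⟩, ?_⟩
    · intro x hx
      exact ⟨0, fun _ => x, hx, fun j hj => absurd hj (Nat.not_lt_zero j), rfl⟩
    · rintro a b ⟨n, s, h0, hp, rfl⟩ hab
      refine ⟨n + 1, fun m => if m ≤ n then s m else b, by simpa using h0, ?_, by simp⟩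
      intro j hj
      rcases Nat.lt_or_ge j n with h | h
      · simp only [if_pos (le_of_lt h), if_pos (Nat.succ_le_of_lt h)]
        exact hp j h
      · have hjn : j = n := by omega
        subst hjn
        simpa using hab
    · ext x
      simp only [Set.mem_inter_iff, Set.mem_setOf_eq, Set.mem_empty_iff_false, iff_false,
        not_and]
      intro hr hb
      have hx : x ∈ Inv := reachable_mem_of_kInductive hk hInv x hr
      have : x ∈ Inv ∩ Bad := ⟨hx, hb⟩
      simp [hsafe] at this

end KAvy
end

section
/- Strengthening of k-inductive invariants: for every k ≥ 1 and every k-inductive invariant Inv_k of the transition system, there exists an inductive invariant Inv_1 with Init ⊆ Inv_1 and Inv_1 ⊆ Inv_k. Moreover, if Inv_k is safe then Inv_1 can be chosen safe. -/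
namespace KAvy

variable {σ : Type*}

/-- Strengthening of `k`-inductive invariants: every `k`-inductive invariant contains
an inductive invariant (which contains `Init`), and it can be chosen safe whenever the
`k`-inductive invariant is safe. -/
theorem kInductive_strengthening
    (Init Bad : Set σ) (Tr : σ → σ → Prop) (k : ℕ) (hk : 1 ≤ k)
    (Invk : Set σ) (hInvk : IsKInductiveInvariant Init Tr Invk k) :
    ∃ Inv1 : Set σ, IsInductiveInvariant Init Tr Inv1 ∧ Init ⊆ Inv1 ∧ Inv1 ⊆ Invk ∧
      (Invk ∩ Bad = ∅ → Inv1 ∩ Bad = ∅) := by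
  -- Every reachable state is in Invk
  have key : ∀ n, ∀ s : ℕ → σ, s 0 ∈ Init → IsPath Tr s n → s n ∈ Invk := by
    intro n
    induction n using Nat.strong_induction_on with
    | _ n ih =>
      intro s hs0 hpath
      by_cases hle : n ≤ k - 1
      · exact hInvk.1 n hle s hs0 hpath n le_rfl
      · push_neg at hle
        have hkn : k ≤ n := by omega
        set t : ℕ → σ := fun j => s (n - k + j) with ht
        have htk : t k = s n := by simp [ht]; congr 1; omega
        have htpath : IsPath Tr t k := by
          intro j hj
          have : n - k + (j + 1) = (n - k + j) + 1 := by omega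
          simpa [ht, this] using hpath (n - k + j) (by omega)
        have hmem : ∀ j, j < k → t j ∈ Invk := by
          intro j hj
          exact ih (n - k + j) (by omega) s hs0 (fun m hm => hpath m (by omega))
        rw [← htk]
        exact hInvk.2 t htpath hmem
  refine ⟨{x | Reachable Init Tr x}, ⟨?_, ?_⟩, ?_, ?_, ?_⟩
  · intro x hx; exact ⟨0, fun _ => x, hx, fun j hj => absurd hj (Nat.not_lt_zero j), rfl⟩
  · rintro a b ⟨m, s, hs0, hpath, hsn⟩ hab
    refine ⟨m + 1, fun i => if i ≤ m then s i else b, by simp [hs0], ?_, by simp⟩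
    intro j hj
    rcases Nat.lt_or_ge j m with h | h
    · simp only [if_pos (le_of_lt h), if_pos (by omega : j + 1 ≤ m)]
      exact hpath j h
    · have : j = m := by omega
      subst this
      simp only [if_pos le_rfl, if_neg (by omega : ¬ j + 1 ≤ j)]
      rwa [hsn]
  · intro x hx; exact ⟨0, fun _ => x, hx, fun j hj => absurd hj (Nat.not_lt_zero j), rfl⟩
  · rintro x ⟨n, s, hs0, hpath, hsn⟩
    rw [← hsn]; exact key n s hs0 hpath
  · intro hsafe
    apply Set.eq_empty_of_subset_empty
    rintro x ⟨hx1, hx2⟩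
    obtain ⟨n, s, hs0, hpath, hsn⟩ := hx1
    have : x ∈ Invk ∩ Bad := ⟨hsn ▸ key n s hs0 hpath, hx2⟩
    simp [hsafe] at this

end KAvy
end

section
/- Proposition 1: Let F be a safe inductive trace of size N and let 0 ≤ i ≤ N. Then i is an extension level of F if and only if the suffix formula Tr[F^i] ∧ Bad(v_{N+1}) is unsatisfiable. -/
namespace KAvy

variable {σ : Type*}

/-- Proposition 1: `i` is an extension level of a safe trace `F` of size `N` iff
the suffix formula `Tr[F^i] ∧ Bad(v_{N+1})` is unsatisfiable. -/
theorem extensionLevel_iff_suffix_unsat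
    (Init Bad : Set σ) (Tr : σ → σ → Prop) (F : ℕ → Set σ) (N : ℕ)
    (hF : IsTrace Init Tr F N) (hsafe : TraceSafe Bad F N)
    (i : ℕ) (hi : i ≤ N) :
    IsExtensionLevel Init Bad Tr F N i ↔ ¬ SuffixSat Bad Tr F N i := by
  constructor
  · rintro ⟨-, G, M, hNM, hGtr, hGsafe, hGstr, hGext⟩ ⟨s, hTr, hmem, hbad⟩
    have key : ∀ d, i + 1 + d ≤ N + 1 → s (i + 1 + d) ∈ G (i + 1 + d) := by
      intro d
      induction d with
      | zero => intro _; exact hGext _ _ (hmem i le_rfl hi) (hTr i le_rfl hi)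
      | succ d ih =>
        intro hd
        have h1 : i + 1 + d ≤ N := by omega
        have h2 := hGtr.2 (i + 1 + d) (by omega) _ _ (ih (by omega))
          (hTr _ (by omega) h1)
        have he : i + 1 + (d + 1) = i + 1 + d + 1 := by omega
        rw [he]; exact h2
    have hN1 : s (N + 1) ∈ G (N + 1) := by
      have h := key (N - i) (by omega)
      have he : i + 1 + (N - i) = N + 1 := by omega
      rwa [he] at h
    have h := hGsafe (N + 1) (by omega)
    exact absurd h (by
      intro h
      exact absurd h (Set.nonempty_iff_ne_empty.mp ⟨s (N + 1), hN1, hbad⟩))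
  · intro hunsat
    refine ⟨hi, ?_⟩
    -- BR j x : from x at position j there is a bad suffix staying in frames
    set BR : ℕ → σ → Prop := fun j x => ∃ s : ℕ → σ, s j = x ∧
      (∀ l, j ≤ l → l ≤ N → Tr (s l) (s (l + 1)) ∧ s l ∈ F l) ∧ s (N + 1) ∈ Bad
      with hBRdef
    have hBRi : ∀ x, ¬ BR i x := by
      rintro x ⟨s, -, hls, hb⟩
      exact hunsat ⟨s, fun j h1 h2 => (hls j h1 h2).1, fun j h1 h2 => (hls j h1 h2).2, hb⟩
    have hstep : ∀ j, i ≤ j → j ≤ N → ∀ a b, a ∈ F j → ¬ BR j a → Tr a b →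
        ¬ BR (j + 1) b := by
      rintro j hij hjN a b haF hnBR hTrab ⟨s, hsb, hls, hb⟩
      apply hnBR
      refine ⟨fun l => if l = j then a else s l, by simp, ?_, ?_⟩
      · intro l hl1 hl2
        by_cases hlj : l = j
        · subst hlj
          constructor
          · simp only [if_pos rfl, if_neg (by omega : ¬ l + 1 = l)]
            rw [hsb]; exact hTrab
          · simpa using haF
        · have hl : j + 1 ≤ l := by omega
          simp only [if_neg hlj, if_neg (by omega : ¬ l + 1 = j)]
          exact hls l hl hl2
      · simpa [if_neg (by omega : ¬ N + 1 = j)] using hb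
    have hBRN1 : ∀ b, ¬ BR (N + 1) b → b ∉ Bad := by
      intro b hn hb
      exact hn ⟨fun _ => b, rfl, fun l h1 h2 => by omega, hb⟩
    refine ⟨fun j => if j ≤ i then F j else if j ≤ N then {x | x ∈ F j ∧ ¬ BR j x}
      else {x | x ∉ Bad}, N + 1, by omega, ⟨?_, ?_⟩, ?_, ?_, ?_⟩
    · simp only [if_pos (Nat.zero_le i)]
      exact hF.1
    · intro j hj a b haG hT
      by_cases hji : j + 1 ≤ i
      · simp only [if_pos (by omega : j ≤ i)] at haG
        simp only [if_pos hji]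
        exact hF.2 j (by omega) a b haG hT
      · -- j + 1 > i
        have haFnBR : a ∈ F j ∧ ¬ BR j a := by
          by_cases hji' : j ≤ i
          · have : j = i := by omega
            subst this
            simp only [if_pos le_rfl] at haG
            exact ⟨haG, hBRi a⟩
          · simp only [if_neg hji', if_pos (by omega : j ≤ N), Set.mem_setOf_eq] at haG
            exact haG
        have hij : i ≤ j := by omega
        have hnBR' := hstep j hij (by omega) a b haFnBR.1 haFnBR.2 hT
        by_cases hjN : j + 1 ≤ N
        · simp only [if_neg hji, if_pos hjN, Set.mem_setOf_eq]
          exact ⟨hF.2 j (by omega) a b haFnBR.1 hT, hnBR'⟩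
        · have hjN' : j = N := by omega
          simp only [if_neg hji, if_neg (show ¬ j + 1 ≤ N by omega), Set.mem_setOf_eq]
          exact hBRN1 b (hjN' ▸ hnBR')
    · intro j hj
      by_cases h1 : j ≤ i
      · simp only [if_pos h1]
        exact hsafe j (by omega)
      · by_cases h2 : j ≤ N
        · simp only [if_neg h1, if_pos h2]
          have := hsafe j h2
          apply Set.eq_empty_of_subset_empty
          intro x ⟨hx1, hx2⟩
          rw [← this]
          exact ⟨hx1.1, hx2⟩
        · simp only [if_neg h1, if_neg h2]
          apply Set.eq_empty_of_subset_empty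
          rintro x ⟨hx1, hx2⟩
          exact absurd hx2 hx1
    · intro j hj
      have hjN : j ≤ N := by omega
      by_cases h1 : j ≤ i
      · simp only [if_pos h1]; exact le_rfl
      · simp only [if_neg h1, if_pos hjN]
        intro x hx
        exact hx.1
    · intro a b haF hT
      have hnBR' := hstep i le_rfl hi a b haF (hBRi a) hT
      simp only [if_neg (by omega : ¬ i + 1 ≤ i)]
      by_cases h2 : i + 1 ≤ N
      · simp only [if_pos h2, Set.mem_setOf_eq]
        exact ⟨hF.2 i (by omega) a b haF hT, hnBR'⟩
      · have hiN : i = N := by omega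
        simp only [if_neg h2, Set.mem_setOf_eq]
        exact hBRN1 b (hiN ▸ hnBR')

end KAvy
end

section
/- Lemma 2 (k-step consecution of interpolant conjunctions): Let F be a monotone safe inductive trace of size N, let 0 ≤ i ≤ N and 1 ≤ k ≤ i+1, and let I_{i−k+2}, …, I_{N+1} be sets of states satisfying the sequence-interpolant conditions (♥). Then for every path s_0, …, s_k with s_0, …, s_{k−1} ∈ F_i, the endpoint satisfies s_k ∈ F_{i+1} ∩ ⋂_{m=i−k+2}^{i+1} I_m. In particular, the set F_{i+1} ∩ ⋂_{m=i−k+2}^{i+1} I_m satisfies the induction-step condition of k-induction relative to F_i: every path s_0, …, s_k with s_0, …, s_{k−1} in this set intersected with F_i ends in the set. -/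
namespace KAvy

variable {σ : Type*}

/-- Lemma 2: given a monotone safe trace `F` of size `N` (padded with `F (N+1) = univ`)
and a sequence interpolant `I` satisfying (♥), every path of length `k` whose first `k`
states are in `F i` ends in `F (i+1) ∩ ⋂_{m=i-k+2}^{i+1} I m`; in particular this set
satisfies the induction-step condition of `k`-induction relative to `F i`. -/
theorem seqItp_conjunction_kInductive
    (Init Bad : Set σ) (Tr : σ → σ → Prop) (F : ℕ → Set σ) (N : ℕ)
    (hF : IsTrace Init Tr F N) (hsafe : TraceSafe Bad F N)
    (hmono : TraceMonotone F N) (hpad : F (N + 1) = Set.univ)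
    (i k : ℕ) (hi : i ≤ N) (hk1 : 1 ≤ k) (hk2 : k ≤ i + 1)
    (I : ℕ → Set σ) (hI : SeqItp Bad Tr F N i k I) :
    (∀ s : ℕ → σ, IsPath Tr s k → (∀ j, j < k → s j ∈ F i) →
      s k ∈ F (i + 1) ∩ ⋂ m ∈ Finset.Icc (i + 2 - k) (i + 1), I m) ∧
    (∀ s : ℕ → σ, IsPath Tr s k →
      (∀ j, j < k →
        s j ∈ (F (i + 1) ∩ ⋂ m ∈ Finset.Icc (i + 2 - k) (i + 1), I m) ∩ F i) →
      s k ∈ F (i + 1) ∩ ⋂ m ∈ Finset.Icc (i + 2 - k) (i + 1), I m) := by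
  obtain ⟨hF0, hFstep⟩ := hF
  obtain ⟨hIa, hIb, hIc, hId⟩ := hI
  have key : ∀ s : ℕ → σ, IsPath Tr s k → (∀ j, j < k → s j ∈ F i) →
      s k ∈ F (i + 1) ∩ ⋂ m ∈ Finset.Icc (i + 2 - k) (i + 1), I m := by
    intro s hpath hmem
    have hsk1 : s (k - 1) ∈ F i := hmem _ (by omega)
    have htr : Tr (s (k - 1)) (s k) := by
      have := hpath (k - 1) (by omega)
      have h1 : k - 1 + 1 = k := by omega
      rwa [h1] at this
    constructor
    · rcases Nat.lt_or_ge i N with h | h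
      · exact hFstep i h _ _ hsk1 htr
      · have : i = N := le_antisymm hi h
        subst this; rw [hpad]; trivial
    · have main : ∀ t, 1 ≤ t → t ≤ k → ∀ m, i + 2 - k ≤ m → m ≤ i + 1 - k + t →
          s t ∈ I m := by
        intro t
        induction t with
        | zero => omega
        | succ t ih =>
          intro _ ht2 m hm1 hm2
          rcases Nat.eq_or_lt_of_le hm1 with h | h
          · subst h
            exact hIa _ _ (hmem t (by omega)) (hpath t (by omega))
          · obtain ⟨j, rfl⟩ : ∃ j, m = j + 1 := ⟨m - 1, by omega⟩
            have hst : s t ∈ I j := ih (by omega) (by omega) j (by omega) (by omega)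
            exact hIb j (by omega) (by omega) _ _ (hmem t (by omega)) hst
              (hpath t (by omega))
      simp only [Set.mem_iInter, Finset.mem_Icc]
      intro m hm
      exact main k hk1 le_rfl m hm.1 (by omega)
  exact ⟨key, fun s hp hmem => key s hp (fun j hj => (hmem j hj).2)⟩

end KAvy
end

section
/- Lemma 3 (interpolant-defined extension trace): Let F be a monotone safe inductive trace of size N, let 0 ≤ i ≤ N and 1 ≤ k ≤ i+1, and let I_{i−k+2}, …, I_{N+1} satisfy the sequence-interpolant conditions (♥). Define G_0, …, G_{N+1} by: G_j = F_j for 0 ≤ j < i−k+2; G_j = F_j ∩ ⋂_{m=i−k+2}^{j} I_m for i−k+2 ≤ j < i+2; G_j = F_j ∩ I_j for i+2 ≤ j < N+1; and G_{N+1} = I_{N+1}. Then G is an (i, k)-extension trace of F (not necessarily monotone): G is a safe inductive trace of size N+1, stronger than F, and for every path s_0, …, s_k with s_0, …, s_{k−1} ∈ F_i one has s_k ∈ G_{i+1}. -/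
namespace KAvy

variable {σ : Type*}

/-- The trace `G` defined from `F` and the sequence interpolant `I` in Lemma 3. -/
def interpolantExtendTrace (F I : ℕ → Set σ) (N i k : ℕ) : ℕ → Set σ := fun j =>
  if j = N + 1 then I (N + 1)
  else if j < i + 2 - k then F j
  else if j < i + 2 then F j ∩ ⋂ m ∈ Finset.Icc (i + 2 - k) j, I m
  else F j ∩ I j

/-- Lemma 3: the trace `G` defined from the sequence interpolant is an
`(i, k)`-extension trace of `F`: a safe inductive trace of size `N+1`, stronger than
`F`, such that every path of length `k` whose first `k` states are in `F i` ends in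
`G (i+1)`. -/
theorem interpolant_defined_extension_trace
    (Init Bad : Set σ) (Tr : σ → σ → Prop) (F : ℕ → Set σ) (N : ℕ)
    (hF : IsTrace Init Tr F N) (hsafe : TraceSafe Bad F N)
    (hmono : TraceMonotone F N)
    (i k : ℕ) (hi : i ≤ N) (hk1 : 1 ≤ k) (hk2 : k ≤ i + 1)
    (I : ℕ → Set σ) (hI : SeqItp Bad Tr F N i k I) :
    IsTrace Init Tr (interpolantExtendTrace F I N i k) (N + 1) ∧
    TraceSafe Bad (interpolantExtendTrace F I N i k) (N + 1) ∧
    Stronger (interpolantExtendTrace F I N i k) (N + 1) F N ∧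
    (∀ s : ℕ → σ, IsPath Tr s k → (∀ j, j < k → s j ∈ F i) →
      s k ∈ interpolantExtendTrace F I N i k (i + 1)) := by
  obtain ⟨hF0, hFstep⟩ := hF
  obtain ⟨hI1, hI2, hI3, hI4⟩ := hI
  -- computation lemmas for G
  have hG_top : interpolantExtendTrace F I N i k (N + 1) = I (N + 1) := by
    simp [interpolantExtendTrace]
  have hG_low : ∀ j, j < i + 2 - k → interpolantExtendTrace F I N i k j = F j := by
    intro j hj
    have h1 : j ≠ N + 1 := by omega
    simp [interpolantExtendTrace, h1, hj]
  have hG_mid : ∀ j x, i + 2 - k ≤ j → j < i + 2 → j ≠ N + 1 →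
      (x ∈ interpolantExtendTrace F I N i k j ↔
        x ∈ F j ∧ ∀ m, i + 2 - k ≤ m → m ≤ j → x ∈ I m) := by
    intro j x h1 h2 h3
    have h4 : ¬ j < i + 2 - k := by omega
    simp [interpolantExtendTrace, h3, h4, h2, Set.mem_iInter, Finset.mem_Icc, and_imp]
  have hG_high : ∀ j x, i + 2 ≤ j → j ≤ N →
      (x ∈ interpolantExtendTrace F I N i k j ↔ x ∈ F j ∧ x ∈ I j) := by
    intro j x h1 h2
    have h3 : j ≠ N + 1 := by omega
    have h4 : ¬ j < i + 2 - k := by omega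
    have h5 : ¬ j < i + 2 := by omega
    simp [interpolantExtendTrace, h3, h4, h5]
  -- monotonicity over ranges
  have hmono' : ∀ p q, p ≤ q → q ≤ N → F p ⊆ F q := by
    intro p q hpq hqN
    induction q with
    | zero =>
      have : p = 0 := by omega
      subst this; exact subset_rfl
    | succ n ih =>
      rcases Nat.lt_or_ge p (n + 1) with h | h
      · exact (ih (by omega) (by omega)).trans (hmono n (by omega))
      · have : p = n + 1 := by omega
        subst this; exact subset_rfl
  -- G j ⊆ F j for j ≤ N
  have hG_sub : ∀ j, j ≤ N → interpolantExtendTrace F I N i k j ⊆ F j := by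
    intro j hj x hx
    by_cases h1 : j < i + 2 - k
    · rwa [hG_low j h1] at hx
    · by_cases h2 : j < i + 2
      · exact ((hG_mid j x (by omega) h2 (by omega)).1 hx).1
      · exact ((hG_high j x (by omega) hj).1 hx).1
  refine ⟨⟨?_, ?_⟩, ?_, ?_, ?_⟩
  · -- G 0 = Init
    rw [hG_low 0 (by omega), hF0]
  · -- inductive step
    intro j hj a b ha hab
    by_cases hA : j + 1 < i + 2 - k
    · rw [hG_low j (by omega)] at ha
      rw [hG_low (j + 1) hA]
      exact hFstep j (by omega) a b ha hab
    by_cases hB : j + 1 = i + 2 - k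
    · rw [hG_low j (by omega)] at ha
      have haFi : a ∈ F i := hmono' j i (by omega) hi ha
      have hb : b ∈ I (i + 2 - k) := hI1 a b haFi hab
      by_cases hjN : j = N
      · have : j + 1 = N + 1 := by omega
        rw [this, hG_top]
        have h2 : N + 1 = i + 2 - k := by omega
        rw [h2]; exact hb
      · rw [hG_mid (j + 1) b (by omega) (by omega) (by omega)]
        refine ⟨hFstep j (by omega) a b ha hab, ?_⟩
        intro m hm1 hm2
        have : m = i + 2 - k := by omega
        rw [this]; exact hb
    by_cases hC : j ≤ i
    · -- i + 2 - k ≤ j ≤ i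
      have hj1 : i + 2 - k ≤ j := by omega
      obtain ⟨haF, haI⟩ := (hG_mid j a hj1 (by omega) (by omega)).1 ha
      have haFi : a ∈ F i := hmono' j i hC hi haF
      by_cases hjN : j = N
      · have hiN : i = N := by omega
        have : j + 1 = N + 1 := by omega
        rw [this, hG_top]
        have := hI2 j (by omega) (by omega) a b haFi (haI j (by omega) le_rfl) hab
        rwa [hjN] at this
      · rw [hG_mid (j + 1) b (by omega) (by omega) (by omega)]
        refine ⟨hFstep j (by omega) a b haF hab, ?_⟩
        intro m hm1 hm2
        rcases Nat.eq_or_lt_of_le hm1 with h | h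
        · rw [← h]; exact hI1 a b haFi hab
        · obtain ⟨m', rfl⟩ : ∃ m', m = m' + 1 := ⟨m - 1, by omega⟩
          exact hI2 m' (by omega) (by omega) a b haFi (haI m' (by omega) (by omega)) hab
    by_cases hD : j = i + 1
    · have hiN : i < N := by omega
      obtain ⟨haF, haI⟩ := (hG_mid j a (by omega) (by omega) (by omega)).1 ha
      have hb : b ∈ I (i + 2) := by
        have := hI3 (i + 1) (by omega) (by omega) a b (by rwa [hD] at haF)
          (haI (i + 1) (by omega) (by omega)) hab
        exact this
      by_cases hjN : j = N
      · have : j + 1 = N + 1 := by omega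
        rw [this, hG_top]
        have : N + 1 = i + 2 := by omega
        rw [this]; exact hb
      · rw [hG_high (j + 1) b (by omega) (by omega)]
        refine ⟨hFstep j (by omega) a b haF hab, ?_⟩
        have : j + 1 = i + 2 := by omega
        rw [this]; exact hb
    · -- i + 2 ≤ j
      have hj2 : i + 2 ≤ j := by omega
      obtain ⟨haF, haI⟩ := (hG_high j a hj2 (by omega)).1 ha
      have hb : b ∈ I (j + 1) := hI3 j (by omega) (by omega) a b haF haI hab
      by_cases hjN : j = N
      · have : j + 1 = N + 1 := by omega
        rw [this, hG_top]
        rwa [← hjN]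
      · rw [hG_high (j + 1) b (by omega) (by omega)]
        exact ⟨hFstep j (by omega) a b haF hab, hb⟩
  · -- safety
    intro j hj
    by_cases hjN : j = N + 1
    · rw [hjN, hG_top]; exact hI4
    · have hjN' : j ≤ N := by omega
      have hs := hsafe j hjN'
      rw [Set.eq_empty_iff_forall_notMem] at hs ⊢
      rintro x ⟨hx1, hx2⟩
      exact hs x ⟨hG_sub j hjN' hx1, hx2⟩
  · -- stronger
    intro j hj
    have : j ≤ N := by omega
    exact hG_sub j this
  · -- path condition
    intro s hpath hmem
    have key : ∀ t, t ≤ k → 1 ≤ t → ∀ m, i + 2 - k ≤ m → m ≤ i + 1 - k + t → s t ∈ I m := by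
      intro t
      induction t with
      | zero => intro _ h; omega
      | succ n ih =>
        intro htk _ m hm1 hm2
        rcases Nat.eq_or_lt_of_le hm1 with h | h
        · rw [← h]
          exact hI1 (s n) (s (n + 1)) (hmem n (by omega)) (hpath n (by omega))
        · obtain ⟨m', rfl⟩ : ∃ m', m = m' + 1 := ⟨m - 1, by omega⟩
          have hn1 : 1 ≤ n := by omega
          exact hI2 m' (by omega) (by omega) (s n) (s (n + 1)) (hmem n (by omega))
            (ih (by omega) hn1 m' (by omega) (by omega)) (hpath n (by omega))
    by_cases hiN : i = N
    · have : i + 1 = N + 1 := by omega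
      rw [this, hG_top]
      exact key k le_rfl hk1 (N + 1) (by omega) (by omega)
    · rw [hG_mid (i + 1) (s k) (by omega) (by omega) (by omega)]
      constructor
      · have h := hpath (k - 1) (by omega)
        rw [Nat.sub_add_cancel hk1] at h
        exact hFstep i (by omega) (s (k - 1)) (s k) (hmem (k - 1) (by omega)) h
      · intro m hm1 hm2
        exact key k le_rfl hk1 m hm1 (by omega)

end KAvy
end

section
/- Level-monotonicity of characteristic-formula satisfiability: Let F be a monotone safe inductive trace of size N, let 0 ≤ j < p ≤ N and 1 ≤ ℓ ≤ j+1. If the characteristic formula χ(F, j, ℓ) ∧ Bad(v_{N+1}) is satisfiable, then χ(F, p, ℓ) ∧ Bad(v_{N+1}) is satisfiable. Consequently, if (j, ℓ) is not a strong extension level of F, then (p, ℓ) is not a strong extension level of F for any p > j. -/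
namespace KAvy

variable {σ : Type*}

/-- Endpoints of paths of length `ℓ + (i - (j+1))` whose first `ℓ` states lie in `F j`. -/
def Ext (Tr : σ → σ → Prop) (F : ℕ → Set σ) (j ℓ i : ℕ) : Set σ :=
  {x | j + 1 ≤ i ∧ ∃ s : ℕ → σ, IsPath Tr s (ℓ + (i - (j + 1))) ∧
    (∀ q, q < ℓ → s q ∈ F j) ∧ s (ℓ + (i - (j + 1))) = x}

lemma ext_succ {Tr : σ → σ → Prop} {F : ℕ → Set σ} {j ℓ i : ℕ} {x b : σ}
    (hx : x ∈ Ext Tr F j ℓ i) (hTr : Tr x b) : b ∈ Ext Tr F j ℓ (i + 1) := by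
  obtain ⟨hji, s, hpath, hmem, hend⟩ := hx
  have hm1 : ℓ + (i + 1 - (j + 1)) = (ℓ + (i - (j + 1))) + 1 := by omega
  refine ⟨by omega, fun r => if r = (ℓ + (i - (j + 1))) + 1 then b else s r, ?_, ?_, ?_⟩
  · rw [hm1]
    intro r hr
    rcases Nat.lt_or_ge r (ℓ + (i - (j + 1))) with h | h
    · simp only [if_neg (by omega : ¬ r = ℓ + (i - (j+1)) + 1),
        if_neg (by omega : ¬ r + 1 = ℓ + (i - (j+1)) + 1)]
      exact hpath r h
    · have hr' : r = ℓ + (i - (j + 1)) := by omega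
      subst hr'
      simp only [if_neg (by omega : ¬ ℓ + (i - (j+1)) = ℓ + (i - (j+1)) + 1), if_pos rfl]
      rw [hend]; exact hTr
  · intro q hq
    simp only [if_neg (by omega : ¬ q = ℓ + (i - (j+1)) + 1)]
    exact hmem q hq
  · rw [hm1]; simp

lemma ext_pred {Tr : σ → σ → Prop} {F : ℕ → Set σ} {j ℓ i : ℕ} {x : σ}
    (hx : x ∈ Ext Tr F j ℓ (i + 1)) (hji : j + 1 ≤ i) :
    ∃ y, y ∈ Ext Tr F j ℓ i ∧ Tr y x := by
  obtain ⟨_, s, hpath, hmem, hend⟩ := hx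
  have hm : ℓ + (i + 1 - (j + 1)) = (ℓ + (i - (j + 1))) + 1 := by omega
  refine ⟨s (ℓ + (i - (j + 1))), ⟨hji, s, fun r hr => hpath r (by omega), hmem, rfl⟩, ?_⟩
  have h1 := hpath (ℓ + (i - (j + 1))) (by omega)
  rw [show ℓ + (i - (j + 1)) + 1 = ℓ + (i + 1 - (j + 1)) by omega, hend] at h1
  exact h1

lemma frame_mono {F : ℕ → Set σ} {N : ℕ} (hmono : TraceMonotone F N) (a : ℕ) :
    ∀ b, a ≤ b → b ≤ N → F a ⊆ F b := by
  intro b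
  induction b with
  | zero =>
    intro h _
    rw [Nat.le_zero.mp h]
  | succ n ih =>
    intro hab hbN
    rcases Nat.lt_or_ge a (n + 1) with h | h
    · exact (ih (by omega) (by omega)).trans (hmono n (by omega))
    · have : a = n + 1 := by omega
      subst this; exact subset_rfl

/-- Level-monotonicity of characteristic-formula satisfiability: for a monotone safe
trace `F`, if `χ(F, j, ℓ) ∧ Bad` is satisfiable then so is `χ(F, p, ℓ) ∧ Bad` for any
`j < p ≤ N`; consequently, if `(j, ℓ)` is not an SEL then neither is `(p, ℓ)`. -/
theorem chiSat_level_mono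
    (Init Bad : Set σ) (Tr : σ → σ → Prop) (F : ℕ → Set σ) (N : ℕ)
    (hF : IsTrace Init Tr F N) (hsafe : TraceSafe Bad F N)
    (hmono : TraceMonotone F N)
    (j p ℓ : ℕ) (hjp : j < p) (hpN : p ≤ N) (hl1 : 1 ≤ ℓ) (hl2 : ℓ ≤ j + 1) :
    (ChiSat Bad Tr F N j ℓ → ChiSat Bad Tr F N p ℓ) ∧
    (¬ IsSEL Init Bad Tr F N j ℓ → ¬ IsSEL Init Bad Tr F N p ℓ) := by
  constructor
  · rintro ⟨s, h1, h2, h3, h4⟩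
    refine ⟨s, fun m hm1 hm2 => h1 m (by omega) hm2, ?_,
      fun m hm1 hm2 => h3 m (by omega) hm2, h4⟩
    intro m hm1 hm2
    rcases Nat.lt_or_ge j m with h | h
    · exact frame_mono hmono m p hm2 hpN (h3 m h (by omega))
    · exact frame_mono hmono j p (by omega) hpN (h2 m (by omega) h)
  · intro hnsel hselp
    apply hnsel
    obtain ⟨hpN', hl1', hl2', G, M, hNM, hGtr, hGsafe, hGstr, hGsel⟩ := hselp
    set d := p - j with hd
    -- Ext stays inside F up to level N
    have hA : ∀ i, i ≤ N → Ext Tr F j ℓ i ⊆ F i := by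
      intro i
      induction i with
      | zero => intro _ x hx; exact absurd hx.1 (by omega)
      | succ n ih =>
        intro hN x hx
        have hji : j + 1 ≤ n + 1 := hx.1
        rcases Nat.lt_or_ge j n with h | h
        · obtain ⟨y, hy, hTr⟩ := ext_pred hx (by omega)
          exact hF.2 n (by omega) y x (ih (by omega) hy) hTr
        · have hnj : n = j := by omega
          obtain ⟨_, s, hpath, hmem, hend⟩ := hx
          have hsl : s (ℓ - 1 + 1) ∈ F (j + 1) :=
            hF.2 j (by omega) _ _ (hmem (ℓ - 1) (by omega)) (hpath (ℓ - 1) (by omega))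
          rw [show ℓ - 1 + 1 = ℓ + (n + 1 - (j + 1)) by omega, hend] at hsl
          rw [hnj]
          exact hsl
    -- Ext at level p+1 is inside G (p+1)
    have hB : Ext Tr F j ℓ (p + 1) ⊆ G (p + 1) := by
      intro x hx
      obtain ⟨_, s, hpath, hmem, hend⟩ := hx
      have hmm : ℓ + (p + 1 - (j + 1)) = ℓ + d := by omega
      rw [hmm] at hpath hend
      have key : ∀ r, r ≤ d → ∀ q, q < ℓ → s (r + q) ∈ F (j + r) := by
        intro r
        induction r with
        | zero => intro _ q hq; simpa using hmem q hq
        | succ n ih =>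
          intro hnd q hq
          rcases Nat.lt_or_ge (q + 1) ℓ with h | h
          · have h1 := ih (by omega) (q + 1) h
            rw [show n + 1 + q = n + (q + 1) by omega]
            exact frame_mono hmono (j + n) (j + (n + 1)) (by omega) (by omega) h1
          · have h1 := ih (by omega) (ℓ - 1) (by omega)
            have h2 := hpath (n + (ℓ - 1)) (by omega)
            have h3 := hF.2 (j + n) (by omega) _ _ h1 h2
            rw [show n + 1 + q = n + (ℓ - 1) + 1 by omega]
            exact h3
      have hres : s (d + ℓ) ∈ G (p + 1) := by
        refine hGsel (fun q => s (d + q)) (fun q hq => hpath (d + q) (by omega)) ?_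
        intro q hq
        have h1 := key d le_rfl q hq
        rwa [show j + d = p by omega] at h1
      rw [show ℓ + d = d + ℓ by omega] at hend
      exact hend ▸ hres
    -- Ext beyond p+1 is inside G
    have hC : ∀ i, i ≤ M → p + 1 ≤ i → Ext Tr F j ℓ i ⊆ G i := by
      intro i
      induction i with
      | zero => intro _ h; omega
      | succ n ih =>
        intro hM hpi x hx
        rcases Nat.lt_or_ge p n with h | h
        · obtain ⟨y, hy, hTr⟩ := ext_pred hx (by omega)
          exact hGtr.2 n (by omega) y x (ih (by omega) (by omega) hy) hTr
        · have : n = p := by omega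
          subst this
          exact hB hx
    refine ⟨by omega, hl1, hl2, fun i => G i ∪ Ext Tr F j ℓ i, M, hNM, ⟨?_, ?_⟩, ?_, ?_, ?_⟩
    · have h0 : Ext Tr F j ℓ 0 = ∅ :=
        Set.eq_empty_iff_forall_notMem.mpr (fun x hx => absurd hx.1 (by omega))
      show G 0 ∪ Ext Tr F j ℓ 0 = Init
      rw [h0, Set.union_empty, hGtr.1]
    · intro i hi a b ha hTr
      rcases ha with h | h
      · exact Or.inl (hGtr.2 i hi a b h hTr)
      · exact Or.inr (ext_succ h hTr)
    · intro i hi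
      apply Set.eq_empty_iff_forall_notMem.mpr
      rintro x ⟨hx, hxB⟩
      rcases hx with h | h
      · exact Set.eq_empty_iff_forall_notMem.mp (hGsafe i hi) x ⟨h, hxB⟩
      · rcases le_or_gt i N with hiN | hiN
        · exact Set.eq_empty_iff_forall_notMem.mp (hsafe i hiN) x ⟨hA i hiN h, hxB⟩
        · exact Set.eq_empty_iff_forall_notMem.mp (hGsafe i hi) x
            ⟨hC i hi (by omega) h, hxB⟩
    · intro i hi x hx
      have hiN : i ≤ N := le_trans hi (min_le_left _ _)
      rcases hx with h | h
      · exact hGstr i hi h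
      · exact hA i hiN h
    · intro s hpath hmem
      refine Or.inr ⟨le_refl _, s, ?_, hmem, congrArg s (by omega)⟩
      rw [show ℓ + (j + 1 - (j + 1)) = ℓ by omega]
      exact hpath

end KAvy
end

section
/- Depth-monotonicity of characteristic-formula satisfiability: Let F be a safe inductive trace of size N, let 0 ≤ i ≤ N and 1 ≤ k ≤ k' ≤ i+1. If the characteristic formula χ(F, i, k') ∧ Bad(v_{N+1}) is satisfiable, then χ(F, i, k) ∧ Bad(v_{N+1}) is satisfiable. Consequently, if (i, k) is a strong extension level of F then so is (i, k') for every k ≤ k' ≤ i+1. -/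
namespace KAvy

variable {σ : Type*}

/-- Depth-monotonicity of characteristic-formula satisfiability: for a safe trace `F`,
if `χ(F, i, k') ∧ Bad` is satisfiable then so is `χ(F, i, k) ∧ Bad` for `k ≤ k'`;
consequently, if `(i, k)` is an SEL then so is `(i, k')` for every `k ≤ k' ≤ i + 1`. -/
theorem chiSat_depth_mono
    (Init Bad : Set σ) (Tr : σ → σ → Prop) (F : ℕ → Set σ) (N : ℕ)
    (hF : IsTrace Init Tr F N) (hsafe : TraceSafe Bad F N)
    (i k k' : ℕ) (hi : i ≤ N) (hk1 : 1 ≤ k) (hkk' : k ≤ k') (hk' : k' ≤ i + 1) :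
    (ChiSat Bad Tr F N i k' → ChiSat Bad Tr F N i k) ∧
    (IsSEL Init Bad Tr F N i k → IsSEL Init Bad Tr F N i k') := by
  constructor
  · rintro ⟨s, h1, h2, h3, h4⟩
    refine ⟨s, fun j hj hj' => h1 j (le_trans (by omega) hj) hj',
      fun j hj hj' => h2 j (by omega) hj', h3, h4⟩
  · rintro ⟨_, _, hk2, G, M, hNM, hG, hGsafe, hstr, hstep⟩
    refine ⟨hi, le_trans hk1 hkk', hk', G, M, hNM, hG, hGsafe, hstr, ?_⟩
    intro s hpath hmem
    have h := hstep (fun m => s (m + (k' - k)))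
      (fun j hj => by
        show Tr (s (j + (k' - k))) (s (j + 1 + (k' - k)))
        have := hpath (j + (k' - k)) (by omega)
        rwa [show j + (k' - k) + 1 = j + 1 + (k' - k) by omega] at this)
      (fun j hj => hmem (j + (k' - k)) (by omega))
    simp only [show k + (k' - k) = k' by omega] at h
    exact h

end KAvy
end

section
/- Downward closure of extension levels: Let F be a safe inductive trace of size N. If i is an extension level of F and 0 ≤ j ≤ i, then j is an extension level of F. In particular, if the set W(F) of extension levels is nonempty, it is a downward-closed subset of {0, …, N} and hence has a largest element. -/
namespace KAvy

variable {σ : Type*}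

/-- Downward closure of extension levels: if `i` is an extension level of a safe trace
`F` and `j ≤ i` then `j` is an extension level; in particular, if `W(F)` is nonempty
then it has a largest element. -/
theorem extensionLevels_downward_closed
    (Init Bad : Set σ) (Tr : σ → σ → Prop) (F : ℕ → Set σ) (N : ℕ)
    (hF : IsTrace Init Tr F N) (hsafe : TraceSafe Bad F N) :
    (∀ i j, IsExtensionLevel Init Bad Tr F N i → j ≤ i →
      IsExtensionLevel Init Bad Tr F N j) ∧
    ((∃ i, IsExtensionLevel Init Bad Tr F N i) →
      ∃ m, IsExtensionLevel Init Bad Tr F N m ∧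
        ∀ j, IsExtensionLevel Init Bad Tr F N j → j ≤ m) := by
  classical
  have down : ∀ i j, IsExtensionLevel Init Bad Tr F N i → j ≤ i →
      IsExtensionLevel Init Bad Tr F N j := by
    rintro i j ⟨hiN, G, M, hNM, hGtr, hGsafe, hGstr, hGext⟩ hji
    set H : ℕ → Set σ := fun k => if k ≤ i then F k else if k ≤ N then G k ∩ F k else G k
      with hH
    have hHsub : ∀ k, k ≤ N → H k ⊆ F k := by
      intro k hk x hx
      simp only [hH] at hx
      by_cases h1 : k ≤ i
      · rwa [if_pos h1] at hx
      · rw [if_neg h1, if_pos hk] at hx; exact hx.2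
    refine ⟨hji.trans hiN, H, M, hNM, ?_, ?_, ?_, ?_⟩
    · constructor
      · simp only [hH, if_pos (Nat.zero_le i)]; exact hF.1
      · intro k hk a b ha hab
        simp only [hH] at ha ⊢
        by_cases h1 : k ≤ i
        · by_cases h2 : k < i
          · rw [if_pos (by omega : k + 1 ≤ i)]
            exact hF.2 k (by omega) a b (by simpa [if_pos h1] using ha) hab
          · -- k = i
            have hki : k = i := le_antisymm h1 (by omega)
            rw [if_pos h1] at ha
            have hbG : b ∈ G (i + 1) := hGext a b (hki ▸ ha) hab
            rw [if_neg (by omega : ¬ k + 1 ≤ i)]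
            by_cases h3 : k + 1 ≤ N
            · rw [if_pos h3]
              exact ⟨hki ▸ hbG, hF.2 k (by omega) a b (hki ▸ ha) hab⟩
            · rw [if_neg h3]; exact hki ▸ hbG
        · rw [if_neg h1] at ha
          rw [if_neg (by omega : ¬ k + 1 ≤ i)]
          by_cases h2 : k ≤ N
          · rw [if_pos h2] at ha
            have hbG : b ∈ G (k + 1) := hGtr.2 k hk a b ha.1 hab
            by_cases h3 : k + 1 ≤ N
            · rw [if_pos h3]; exact ⟨hbG, hF.2 k (by omega) a b ha.2 hab⟩
            · rw [if_neg h3]; exact hbG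
          · rw [if_neg h2] at ha
            rw [if_neg (by omega : ¬ k + 1 ≤ N)]
            exact hGtr.2 k hk a b ha hab
    · intro k hk
      by_cases h1 : k ≤ N
      · have := hsafe k h1
        have hsub := hHsub k h1
        apply Set.eq_empty_of_subset_empty
        intro x hx
        rw [← this]; exact ⟨hsub hx.1, hx.2⟩
      · simp only [hH, if_neg (by omega : ¬ k ≤ i), if_neg h1]
        exact hGsafe k hk
    · intro k hk
      exact hHsub k (le_trans hk (min_le_left _ _))
    · intro a b ha hab
      by_cases h1 : j + 1 ≤ i
      · simp only [hH, if_pos h1]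
        exact hF.2 j (by omega) a b ha hab
      · have hji' : j = i := by omega
        subst hji'
        have hbG : b ∈ G (j + 1) := hGext a b ha hab
        simp only [hH, if_neg h1]
        by_cases h3 : j + 1 ≤ N
        · rw [if_pos h3]
          exact ⟨hbG, hF.2 j (by omega) a b ha hab⟩
        · rw [if_neg h3]; exact hbG
  refine ⟨down, ?_⟩
  rintro ⟨i, hi⟩
  refine ⟨Nat.findGreatest (IsExtensionLevel Init Bad Tr F N) N, ?_, ?_⟩
  · exact Nat.findGreatest_spec hi.1 hi
  · intro j hj
    exact Nat.le_findGreatest hj.1 hj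


end KAvy
end

section
/- Safe traces exclude short counterexamples: If the transition system admits a safe inductive trace F of size N, then it admits no counterexample of length at most N; that is, for every path s_0, …, s_n with s_0 ∈ Init and n ≤ N, the endpoint s_n is not in Bad. -/
namespace KAvy

variable {σ : Type*}

/-- Safe traces exclude short counterexamples: if the system admits a safe inductive
trace of size `N`, then no path of length `n ≤ N` starting in `Init` ends in `Bad`. -/
theorem safe_trace_no_short_counterexample
    (Init Bad : Set σ) (Tr : σ → σ → Prop) (F : ℕ → Set σ) (N : ℕ)
    (hF : IsTrace Init Tr F N) (hsafe : TraceSafe Bad F N) :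
    ∀ (n : ℕ), n ≤ N → ∀ s : ℕ → σ, s 0 ∈ Init → IsPath Tr s n → s n ∉ Bad := by
  intro n hn s h0 hp hbad
  have hmem : ∀ j, j ≤ n → s j ∈ F j := by
    intro j hj
    induction j with
    | zero => rw [hF.1]; exact h0
    | succ k ih =>
      exact hF.2 k (lt_of_lt_of_le (Nat.lt_of_succ_le hj) hn) _ _
        (ih (Nat.le_of_succ_le hj)) (hp k (Nat.lt_of_succ_le hj))
  have := hsafe n hn
  have : s n ∈ F n ∩ Bad := ⟨hmem n le_rfl, hbad⟩
  rw [hsafe n hn] at this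
  exact this

end KAvy
end

section
/- Closed safe traces certify safety: Let F be a safe inductive trace of size N that is closed, i.e., there exists 1 ≤ i ≤ N with F_i ⊆ ⋃_{j=0}^{i−1} F_j. Then the set ⋃_{j=0}^{i−1} F_j is a safe inductive invariant; in particular, no reachable state of the transition system is in Bad. -/
namespace KAvy

variable {σ : Type*}

/-- Closed safe traces certify safety: if a safe inductive trace `F` of size `N` is
closed at some `1 ≤ i ≤ N` (i.e. `F i ⊆ ⋃_{j<i} F j`), then `⋃_{j<i} F j` is a safe
inductive invariant, and no reachable state is in `Bad`. -/
theorem closed_safe_trace_certifies_safety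
    (Init Bad : Set σ) (Tr : σ → σ → Prop) (F : ℕ → Set σ) (N : ℕ)
    (hF : IsTrace Init Tr F N) (hsafe : TraceSafe Bad F N)
    (i : ℕ) (hi1 : 1 ≤ i) (hiN : i ≤ N)
    (hclosed : F i ⊆ ⋃ j ∈ Finset.range i, F j) :
    IsInductiveInvariant Init Tr (⋃ j ∈ Finset.range i, F j) ∧
    (⋃ j ∈ Finset.range i, F j) ∩ Bad = ∅ ∧
    (∀ x, Reachable Init Tr x → x ∉ Bad) := by
  obtain ⟨hF0, hFstep⟩ := hF
  set Inv : Set σ := ⋃ j ∈ Finset.range i, F j with hInv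
  have hmem : ∀ x j, j < i → x ∈ F j → x ∈ Inv := by
    intro x j hj hx
    exact Set.mem_biUnion (Finset.mem_range.mpr hj) hx
  have hind : IsInductiveInvariant Init Tr Inv := by
    constructor
    · intro x hx
      exact hmem x 0 hi1 (hF0 ▸ hx)
    · intro a b ha hTr
      simp only [hInv, Set.mem_iUnion, Finset.mem_range] at ha
      obtain ⟨j, hj, haj⟩ := ha
      have hb : b ∈ F (j + 1) := hFstep j (lt_of_lt_of_le hj hiN) a b haj hTr
      rcases lt_or_eq_of_le (Nat.succ_le_of_lt hj) with h | h
      · exact hmem b (j + 1) h hb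
      · exact hclosed (h ▸ hb)
  have hsafeInv : Inv ∩ Bad = ∅ := by
    ext x
    simp only [hInv, Set.mem_inter_iff, Set.mem_iUnion, Finset.mem_range,
      Set.mem_empty_iff_false, iff_false, not_and]
    rintro ⟨j, hj, hxj⟩ hxB
    have := hsafe j (le_of_lt (lt_of_lt_of_le hj hiN))
    exact absurd (Set.mem_inter hxj hxB) (by simp [this])
  refine ⟨hind, hsafeInv, ?_⟩
  rintro x ⟨n, s, hs0, hpath, hsn⟩ hxB
  have hreach : ∀ m, m ≤ n → s m ∈ Inv := by
    intro m hm
    induction m with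
    | zero => exact hind.1 hs0
    | succ k ih =>
      exact hind.2 (s k) (s (k + 1)) (ih (Nat.le_of_succ_le hm)) (hpath k hm)
  have : x ∈ Inv ∩ Bad := ⟨hsn ▸ hreach n le_rfl, hxB⟩
  simp [hsafeInv] at this

end KAvy
end

section
/- A strong extension level yields a regular extension level: Let F be a monotone safe inductive trace of size N. If (i, k) is a strong extension level of F (with 0 ≤ i ≤ N and 1 ≤ k ≤ i+1), then i − k + 1 is an extension level of F. -/
namespace KAvy

variable {σ : Type*}

/-- A strong extension level yields a regular extension level: for a monotone safe
trace `F`, if `(i, k)` is an SEL of `F` then `i - k + 1` is an extension level. -/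
theorem SEL_gives_extensionLevel
    (Init Bad : Set σ) (Tr : σ → σ → Prop) (F : ℕ → Set σ) (N : ℕ)
    (hF : IsTrace Init Tr F N) (hsafe : TraceSafe Bad F N)
    (hmono : TraceMonotone F N)
    (i k : ℕ) (hSEL : IsSEL Init Bad Tr F N i k) :
    IsExtensionLevel Init Bad Tr F N (i + 1 - k) := by
  obtain ⟨hiN, hk1, hki, G, M, hNM, hGtr, hGsafe, hGstr, hGsel⟩ := hSEL
  set e := i + 1 - k with he
  have hek : e + k = i + 1 := by omega
  have heiN : e ≤ i := by omega
  -- monotone chain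
  have hchain : ∀ p q, p ≤ q → q ≤ N → F p ⊆ F q := by
    intro p q hpq hqN
    induction q with
    | zero => simpa [Nat.le_zero.mp hpq] using Set.Subset.rfl
    | succ n ih =>
      rcases Nat.eq_or_lt_of_le hpq with h | h
      · exact h ▸ Set.Subset.rfl
      · exact (ih (by omega) (by omega)).trans (hmono n (by omega))
  -- the A sets
  set A : ℕ → Set σ := fun m => {x | ∀ t : ℕ → σ, t 0 = x → IsPath Tr t (k - m) →
      (∀ j, j < k - m → t j ∈ F i) → t (k - m) ∈ G (i + 1)} with hA
  have hA0 : ∀ x, x ∈ A 0 := by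
    intro x t ht0 hpath hmem
    simpa using hGsel t (by simpa using hpath) (by simpa using hmem)
  have hAstep : ∀ m, m < k → ∀ a b, a ∈ A m → a ∈ F i → Tr a b → b ∈ A (m + 1) := by
    intro m hm a b ha haF hab t ht0 hpath hmem
    have key := ha (fun n => if n = 0 then a else t (n - 1)) rfl ?_ ?_
    · have hne : k - m ≠ 0 := by omega
      simp only [if_neg hne] at key
      have : k - m - 1 = k - (m + 1) := by omega
      rwa [this] at key
    · intro j hj
      rcases Nat.eq_zero_or_pos j with hj0 | hj0
      · subst hj0; simpa [ht0] using hab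
      · have h1 : j ≠ 0 := by omega
        have h2 : j + 1 ≠ 0 := by omega
        simp only [if_neg h1, if_neg h2]
        have : j + 1 - 1 = (j - 1) + 1 := by omega
        rw [this]
        exact hpath (j - 1) (by omega)
    · intro j hj
      rcases Nat.eq_zero_or_pos j with hj0 | hj0
      · subst hj0; simpa using haF
      · have h1 : j ≠ 0 := by omega
        simp only [if_neg h1]
        exact hmem (j - 1) (by omega)
  have hAk : A k ⊆ G (i + 1) := by
    intro x hx
    have := hx (fun _ => x) rfl (by intro j hj; omega) (by intro j hj; omega)
    simpa using this
  -- successors of F e land in A 1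
  have hbase : ∀ a b, a ∈ F e → Tr a b → b ∈ A 1 := fun a b ha hab =>
    hAstep 0 (by omega) a b (hA0 a) (hchain e i heiN hiN ha) hab
  -- the new trace
  set H : ℕ → Set σ := fun j => if j ≤ e then F j else if j ≤ i then A (j - e) ∩ F j else G j
    with hH
  have hHi1 : H (i + 1) = G (i + 1) := by
    have h1 : ¬ (i + 1 ≤ e) := by omega
    have h2 : ¬ (i + 1 ≤ i) := by omega
    simp [hH, h1, h2]
  have hext : ∀ a b, a ∈ F e → Tr a b → b ∈ H (e + 1) := by
    intro a b ha hab
    have hb1 := hbase a b ha hab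
    by_cases hcase : e + 1 ≤ i
    · have h1 : ¬ (e + 1 ≤ e) := by omega
      have h2 : e + 1 - e = 1 := by omega
      simp only [hH, if_neg h1, if_pos hcase, h2]
      exact ⟨hb1, hF.2 e (by omega) a b ha hab⟩
    · have hei : e = i := by omega
      have hk : k = 1 := by omega
      have : e + 1 = i + 1 := by omega
      rw [this, hHi1]
      exact hAk (by rwa [hk])
  refine ⟨by omega, H, M, hNM, ⟨?_, ?_⟩, ?_, ?_, hext⟩
  · -- H 0 = Init
    simp only [hH, if_pos (Nat.zero_le e)]
    exact hF.1
  · -- trace closure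
    intro j hj a b ha hab
    by_cases h1 : j + 1 ≤ e
    · simp only [hH, if_pos (by omega : j ≤ e)] at ha
      simp only [hH, if_pos h1]
      exact hF.2 j (by omega) a b ha hab
    · by_cases h2 : j ≤ e
      · have hje : j = e := by omega
        exact hje ▸ hext a b (by simpa [hH, if_pos h2, hje] using ha) hab
      · by_cases h3 : j ≤ i
        · -- e < j ≤ i
          simp only [hH, if_neg h2, if_pos h3] at ha
          have haA := ha.1
          have haF : a ∈ F i := hchain j i h3 hiN ha.2
          have hstep := hAstep (j - e) (by omega) a b haA haF hab
          by_cases h4 : j + 1 ≤ i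
          · have h5 : ¬ (j + 1 ≤ e) := by omega
            have h6 : j + 1 - e = (j - e) + 1 := by omega
            simp only [hH, if_neg h5, if_pos h4, h6]
            exact ⟨hstep, hF.2 j (by omega) a b ha.2 hab⟩
          · have hji : j = i := by omega
            have h7 : j - e + 1 = k := by omega
            rw [hji, hHi1]
            exact hAk (h7 ▸ hstep)
        · -- j > i : use G
          simp only [hH, if_neg h2, if_neg h3] at ha
          have h5 : ¬ (j + 1 ≤ e) := by omega
          have h6 : ¬ (j + 1 ≤ i) := by omega
          simp only [hH, if_neg h5, if_neg h6]
          exact hGtr.2 j hj a b ha hab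
  · -- safety
    intro j hjM
    by_cases h2 : j ≤ e
    · simp only [hH, if_pos h2]
      exact hsafe j (by omega)
    · by_cases h3 : j ≤ i
      · simp only [hH, if_neg h2, if_pos h3]
        have := hsafe j (by omega)
        rw [Set.eq_empty_iff_forall_notMem] at this ⊢
        intro x ⟨⟨_, hxF⟩, hxB⟩
        exact this x ⟨hxF, hxB⟩
      · simp only [hH, if_neg h2, if_neg h3]
        exact hGsafe j hjM
  · -- stronger
    intro j hjmin
    have hjN : j ≤ N := le_trans hjmin (min_le_left _ _)
    by_cases h2 : j ≤ e
    · simp only [hH, if_pos h2]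
      exact Set.Subset.rfl
    · by_cases h3 : j ≤ i
      · simp only [hH, if_neg h2, if_pos h3]
        exact Set.inter_subset_right
      · simp only [hH, if_neg h2, if_neg h3]
        exact hGstr j hjmin

end KAvy
end

section
/- Completeness of k-induction with the simple-path restriction: Assume the state type σ is finite and let P ⊆ σ with Init ⊆ P. Then every reachable state lies in P if and only if there exists k ≥ 1 such that both: (base) for every path s_0, …, s_n with s_0 ∈ Init and n ≤ k−1, all of s_0, …, s_n lie in P; and (step) for every path s_0, …, s_k whose states are pairwise distinct and with s_0, …, s_{k−1} ∈ P, also s_k ∈ P. -/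
namespace KAvy

variable {σ : Type*}

/-- Cutting a loop out of a path. -/
lemma path_cut (Tr : σ → σ → Prop) (t : ℕ → σ) (a b m : ℕ) (hab : a < b) (hbm : b ≤ m)
    (hp : IsPath Tr t m) (heq : t a = t b) :
    ∃ u : ℕ → σ, u 0 = t 0 ∧ IsPath Tr u (m - (b - a)) ∧ u (m - (b - a)) = t m := by
  refine ⟨fun j => if j ≤ a then t j else t (j + (b - a)), by simp, ?_, ?_⟩
  · intro j hj
    show Tr (if j ≤ a then t j else t (j + (b - a)))
      (if j + 1 ≤ a then t (j + 1) else t (j + 1 + (b - a)))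
    rcases lt_trichotomy j a with h | h | h
    · rw [if_pos h.le, if_pos (by omega)]
      exact hp j (by omega)
    · rw [if_pos h.le, if_neg (by omega), h, heq, show a + 1 + (b - a) = b + 1 by omega]
      exact hp b (by omega)
    · rw [if_neg (by omega), if_neg (by omega), show j + 1 + (b - a) = j + (b - a) + 1 by omega]
      exact hp (j + (b - a)) (by omega)
  · show (if m - (b - a) ≤ a then t (m - (b - a)) else t (m - (b - a) + (b - a))) = t m
    rcases le_or_gt (m - (b - a)) a with h | h
    · rw [if_pos h, show m - (b - a) = a by omega, heq]
      congr 1; omega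
    · rw [if_neg (by omega)]
      congr 1; omega

/-- Completeness of `k`-induction with the simple-path restriction: over a finite state
space, with `Init ⊆ P`, every reachable state lies in `P` iff there exists `k ≥ 1` such
that the base case holds for all paths of length `≤ k - 1` from `Init` and the
induction step holds for all simple paths of length `k`. -/
theorem kInduction_complete_with_simple_paths [Finite σ]
    (Init : Set σ) (Tr : σ → σ → Prop) (P : Set σ) (hInit : Init ⊆ P) :
    (∀ x, Reachable Init Tr x → x ∈ P) ↔
    ∃ k : ℕ, 1 ≤ k ∧
      (∀ n, n ≤ k - 1 → ∀ s : ℕ → σ, s 0 ∈ Init → IsPath Tr s n →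
        ∀ j, j ≤ n → s j ∈ P) ∧
      (∀ s : ℕ → σ, IsPath Tr s k →
        (∀ a b, a ≤ k → b ≤ k → a ≠ b → s a ≠ s b) →
        (∀ j, j < k → s j ∈ P) → s k ∈ P) := by
  classical
  constructor
  · intro hsafe
    refine ⟨Nat.card σ + 1, le_add_self, ?_, ?_⟩
    · intro n _ s hs0 hpath j hj
      exact hsafe _ ⟨j, s, hs0, fun i hi => hpath i (hi.trans_le hj), rfl⟩
    · intro s _ hdist _
      exfalso
      have hinj : Function.Injective (fun i : Fin (Nat.card σ + 2) => s i) := by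
        intro a b hab
        by_contra hne
        exact hdist a b (by omega) (by omega) (fun h => hne (Fin.ext h)) hab
      have h1 := Nat.card_le_card_of_injective _ hinj
      have h2 : Nat.card (Fin (Nat.card σ + 2)) = Nat.card σ + 2 := by simp
      omega
  · rintro ⟨k, hk1, hbase, hstep⟩ x ⟨n, s, hs0, hpath, rfl⟩
    by_contra hx
    have hne0 : ∃ m, ∃ t : ℕ → σ, t 0 ∈ Init ∧ IsPath Tr t m ∧ t m ∉ P :=
      ⟨n, s, hs0, hpath, hx⟩
    obtain ⟨t, ht0, htpath, htend⟩ := Nat.find_spec hne0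
    set n0 := Nat.find hne0 with hn0
    have hmin : ∀ m, m < n0 → ∀ u : ℕ → σ, u 0 ∈ Init → IsPath Tr u m → u m ∈ P := by
      intro m hm u hu0 hupath
      by_contra hc
      exact Nat.find_min hne0 hm ⟨u, hu0, hupath, hc⟩
    have hinP : ∀ j, j < n0 → t j ∈ P := fun j hj =>
      hmin j hj t ht0 (fun i hi => htpath i (hi.trans hj))
    have hdist : ∀ a b, a ≤ n0 → b ≤ n0 → a ≠ b → t a ≠ t b := by
      intro a b ha hb hne heq
      wlog hab : a < b generalizing a b
      · exact this b a hb ha hne.symm heq.symm (by omega)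
      obtain ⟨u, hu0, hupath, huend⟩ := path_cut Tr t a b n0 hab hb htpath heq
      have := hmin (n0 - (b - a)) (by omega) u (hu0 ▸ ht0) hupath
      rw [huend] at this
      exact htend this
    rcases le_or_gt n0 (k - 1) with h | h
    · exact htend (hbase n0 h t ht0 htpath n0 le_rfl)
    · have hk : k ≤ n0 := by omega
      have := hstep (fun j => t (n0 - k + j))
        (fun j hj => by
          show Tr (t (n0 - k + j)) (t (n0 - k + j + 1))
          exact htpath (n0 - k + j) (by omega))
        (fun a b ha hb hne => hdist _ _ (by omega) (by omega) (by omega))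
        (fun j hj => hinP _ (by omega))
      have he : n0 - k + k = n0 := by omega
      simp only [he] at this
      exact htend this

end KAvy
end

section
/- Soundness of strong induction: If Inv is a k-inductive invariant of the transition system for some k ≥ 1, then every reachable state belongs to Inv. In particular, if Inv is a safe k-inductive invariant, then no reachable state is in Bad. -/
namespace KAvy

variable {σ : Type*}

/-- Soundness of strong induction: if `Inv` is a `k`-inductive invariant for some
`k ≥ 1`, then every reachable state belongs to `Inv`; in particular, if `Inv` is safe
then no reachable state is in `Bad`. -/
theorem kInduction_sound
    (Init Bad : Set σ) (Tr : σ → σ → Prop) (Inv : Set σ) (k : ℕ) (hk : 1 ≤ k)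
    (hInv : IsKInductiveInvariant Init Tr Inv k) :
    (∀ x, Reachable Init Tr x → x ∈ Inv) ∧
    (Inv ∩ Bad = ∅ → ∀ x, Reachable Init Tr x → x ∉ Bad) := by
  have key : ∀ m, ∀ n, ∀ s : ℕ → σ, s 0 ∈ Init → IsPath Tr s n → m ≤ n → s m ∈ Inv := by
    intro m
    induction m using Nat.strong_induction_on with
    | _ m ih =>
      intro n s h0 hp hmn
      by_cases hmk : m ≤ k - 1
      · exact hInv.1 m hmk s h0 (fun j hj => hp j (lt_of_lt_of_le hj hmn)) m le_rfl
      · have hkm : k ≤ m := by omega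
        have hpath : IsPath Tr (fun j => s (m - k + j)) k := by
          intro j hj
          have : m - k + j < n := by omega
          have := hp (m - k + j) this
          simpa [Nat.add_assoc] using this
        have hall : ∀ j, j < k → s (m - k + j) ∈ Inv := by
          intro j hj
          exact ih (m - k + j) (by omega) n s h0 hp (by omega)
        have := hInv.2 (fun j => s (m - k + j)) hpath hall
        simpa [Nat.sub_add_cancel hkm] using this
  constructor
  · rintro x ⟨n, s, h0, hp, rfl⟩
    exact key n n s h0 hp le_rfl
  · intro hsafe x hx hbad
    rcases hx with ⟨n, s, h0, hp, rfl⟩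
    have : s n ∈ Inv ∩ Bad := ⟨key n n s h0 hp le_rfl, hbad⟩
    simp [hsafe] at this

end KAvy
end

section
/- Existence of monotone strong extension traces (semantic content of Theorem 2 on kAvyExtend): Let F be a monotone safe inductive trace of size N and let (i, k) be a strong extension level of F. Then there exists a monotone safe inductive trace G of size N+1 that is stronger than F and satisfies: for every path s_0, …, s_k with s_0, …, s_{k−1} ∈ F_i, one has s_k ∈ G_{i+1}. That is, F admits a monotone (i, k)-extension trace of size exactly N+1. -/
namespace KAvy

variable {σ : Type*}

/-- Existence of monotone strong extension traces (semantic content of Theorem 2 on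
kAvyExtend): if `(i, k)` is an SEL of a monotone safe trace `F` of size `N`, then `F`
admits a monotone safe `(i, k)`-extension trace of size exactly `N + 1`. -/
theorem exists_monotone_strong_extension_trace
    (Init Bad : Set σ) (Tr : σ → σ → Prop) (F : ℕ → Set σ) (N : ℕ)
    (hF : IsTrace Init Tr F N) (hsafe : TraceSafe Bad F N)
    (hmono : TraceMonotone F N)
    (i k : ℕ) (hSEL : IsSEL Init Bad Tr F N i k) :
    ∃ G : ℕ → Set σ, IsTrace Init Tr G (N + 1) ∧ TraceSafe Bad G (N + 1) ∧
      TraceMonotone G (N + 1) ∧ Stronger G (N + 1) F N ∧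
      ∀ s : ℕ → σ, IsPath Tr s k → (∀ j, j < k → s j ∈ F i) → s k ∈ G (i + 1) := by
  obtain ⟨hiN, hk1, hki, H, M, hNM, ⟨hH0, hHstep⟩, hHsafe, hHstr, hHpath⟩ := hSEL
  refine ⟨fun j => {x | ∃ l, l ≤ j ∧ x ∈ H l}, ⟨?_, ?_⟩, ?_, ?_, ?_, ?_⟩
  · ext x
    simp only [Set.mem_setOf_eq, Nat.le_zero]
    constructor
    · rintro ⟨l, rfl, hx⟩; rwa [hH0] at hx
    · intro hx; exact ⟨0, rfl, by rwa [hH0]⟩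
  · rintro j hj a b ⟨l, hl, ha⟩ hab
    exact ⟨l + 1, by omega, hHstep l (by omega) a b ha hab⟩
  · intro j hj
    rw [Set.eq_empty_iff_forall_notMem]
    rintro x ⟨⟨l, hl, hx⟩, hb⟩
    have := hHsafe l (by omega)
    rw [Set.eq_empty_iff_forall_notMem] at this
    exact this x ⟨hx, hb⟩
  · rintro j hj x ⟨l, hl, hx⟩
    exact ⟨l, by omega, hx⟩
  · rintro j hj x ⟨l, hl, hx⟩
    have hFl : H l ⊆ F l := hHstr l (by omega)
    have : ∀ m, m ≤ j → l ≤ m → x ∈ F m := by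
      intro m hm
      induction m with
      | zero => intro h; exact Nat.le_zero.mp h ▸ hFl hx
      | succ m ih =>
        intro hlm
        rcases Nat.lt_or_ge l (m + 1) with h | h
        · exact hmono m (by omega) (ih (by omega) (by omega))
        · have : l = m + 1 := by omega
          exact this ▸ hFl hx
    exact this j le_rfl hl
  · intro s hp hs
    exact ⟨i + 1, le_rfl, hHpath s hp hs⟩

end KAvy
end
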